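/- Let 0<q<1, 0 ≤ α ≤ β, n ≥ 1, m ≥ 1, φ : ℝ → ℝ and x ≥ 0. Assume w_k(x) ≥ 0 for all k ≥ 0, ∑_{k=0}^∞ w_k(x) = 1, ∑_{k=0}^∞ w_k(x)·([k]_q + q^{k-1}α)/(q^{k-1}([n]_q + β)) = [n]_q x/([n]_q + β) + α/([n]_q + β), and ∑_{k=0}^∞ w_k(x)·(([k]_q + q^{k-1}α)/(q^{k-1}([n]_q + β)))² = [n]_q [m]_q x²/(q([n]_q + β)²) + [n]_q (2α + 1) x/([n]_q + β)² + α²/([n]_q + β)², all series converging. Then L*_n(e_2; q, x) = [n]_q [m]_q x²/(q([n]_q + β)²) + [n]_q ([3]_q + q((1 + 3α)[2]_q + 1)) x/([3]_q ([n]_q + β)²) + q²(1 + 3α + 3α²)/([3]_q ([n]_q + β)²), where e_2(t) = t². -/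

import Mathlib

open scoped BigOperators

noncomputable section

/-- The `q`-integer `[n]_q = ∑_{i=0}^{n-1} q^i`. -/
def qInt (q : ℝ) (n : ℕ) : ℝ := ∑ i ∈ Finset.range n, q ^ i

/-- The `q`-factorial `[n]_q! = ∏_{j=1}^{n} [j]_q`. -/
def qFact (q : ℝ) (n : ℕ) : ℝ := ∏ j ∈ Finset.range n, qInt q (j + 1)

/-- The `q`-Jackson integral `∫_0^c g(t) d_q t = (1-q) c ∑_{j=0}^∞ q^j g (c q^j)`. -/
def jackson0 (q c : ℝ) (g : ℝ → ℝ) : ℝ := (1 - q) * c * ∑' j : ℕ, q ^ j * g (c * q ^ j)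

/-- The `q`-Jackson integral `∫_a^b g(t) d_q t`. -/
def jackson (q a b : ℝ) (g : ℝ → ℝ) : ℝ := jackson0 q b g - jackson0 q a g

/-- The `q`-derivative operator, with the convention `(D_q g)(0) = 0`. -/
def qD (q : ℝ) (g : ℝ → ℝ) : ℝ → ℝ := fun x =>
  if x = 0 then 0 else (g x - g (q * x)) / ((1 - q) * x)

/-- The weights `w_k(x) = q^{k(k-1)/2} (D_q^k φ)(x) (−x)^k / [k]_q!`. -/
def w (q : ℝ) (φ : ℝ → ℝ) (k : ℕ) (x : ℝ) : ℝ :=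
  q ^ (k * (k - 1) / 2) * ((qD q)^[k] φ) x * (-x) ^ k / qFact q k

/-- Lower node `a_k = q([k]_q + q^{k-1} α)/([n]_q + β)`. -/
def aNode (q α β : ℝ) (n k : ℕ) : ℝ :=
  q * (qInt q k + q ^ ((k : ℤ) - 1) * α) / (qInt q n + β)

/-- Upper node `b_k = ([k+1]_q + q^k α)/([n]_q + β)`. -/
def bNode (q α β : ℝ) (n k : ℕ) : ℝ :=
  (qInt q (k + 1) + q ^ k * α) / (qInt q n + β)

/-- The Stancu type `q`-Baskakov–Kantorovich operator
`L*_n(f; q, x) = ([n]_q + β) ∑_{k=0}^∞ w_k(x) ∫_{a_k}^{b_k} f(q^{1-k} t) d_q t`. -/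
def Lop (q α β : ℝ) (n : ℕ) (φ : ℝ → ℝ) (f : ℝ → ℝ) (x : ℝ) : ℝ :=
  (qInt q n + β) * ∑' k : ℕ, w q φ k x *
    jackson q (aNode q α β n k) (bNode q α β n k) (fun t => f (q ^ (1 - (k : ℤ)) * t))

/-- The moment identities (M) at `x` with parameter `m`. -/
def MomentM (q α β : ℝ) (n m : ℕ) (φ : ℝ → ℝ) (x : ℝ) : Prop :=
  Lop q α β n φ (fun _ => 1) x = 1 ∧
  Lop q α β n φ (fun t => t) x =
    qInt q n * x / (qInt q n + β) + q * (1 + 2 * α) / (qInt q 2 * (qInt q n + β)) ∧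
  Lop q α β n φ (fun t => t ^ 2) x =
    qInt q n * qInt q m * x ^ 2 / (q * (qInt q n + β) ^ 2)
      + qInt q n * (qInt q 3 + q * ((1 + 3 * α) * qInt q 2 + 1)) * x
          / (qInt q 3 * (qInt q n + β) ^ 2)
      + q ^ 2 * (1 + 3 * α + 3 * α ^ 2) / (qInt q 3 * (qInt q n + β) ^ 2)

/-- The quantity `δ_n(x)`. -/
def deltaN (q α β : ℝ) (n m : ℕ) (x : ℝ) : ℝ :=
  (qInt q n * qInt q m / (q * (qInt q n + β) ^ 2) + 1 - 2 * qInt q n / (qInt q n + β)) * x ^ 2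
  + (qInt q n * (qInt q 3 + q * ((1 + 3 * α) * qInt q 2 + 1))
        / (qInt q 3 * (qInt q n + β) ^ 2)
      - 2 * q * (1 + 2 * α) / (qInt q 2 * (qInt q n + β))) * x
  + q ^ 2 * (1 + 3 * α + 3 * α ^ 2) / (qInt q 3 * (qInt q n + β) ^ 2)

open scoped Classical in
/-- Statistical convergence of a real sequence. -/
def StatLim (x : ℕ → ℝ) (L : ℝ) : Prop :=
  ∀ ε > 0, Filter.Tendsto
    (fun n => (((Finset.range n).filter (fun j => ε ≤ |x j - L|)).card : ℝ) / n)
    Filter.atTop (nhds 0)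

open scoped Classical in
/-- Statistical convergence of a real double sequence. -/
def StatLim2 (x : ℕ → ℕ → ℝ) (L : ℝ) : Prop :=
  ∀ ε > 0, Filter.Tendsto
    (fun p : ℕ × ℕ =>
      (((Finset.range p.1 ×ˢ Finset.range p.2).filter
          (fun jk => ε ≤ |x jk.1 jk.2 - L|)).card : ℝ) / (p.1 * p.2))
    Filter.atTop (nhds 0)

/-- Condition (d) on a sequence `(q_n) ⊂ (0,1)`. -/
def CondD (q : ℕ → ℝ) : Prop :=
  StatLim q 1 ∧ (∃ a < (1 : ℝ), StatLim (fun n => q n ^ n) a) ∧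
    StatLim (fun n => 1 / qInt (q n) n) 0

/-- Modulus of continuity on `[0,∞)`. -/
def omegaMod (f : ℝ → ℝ) (δ : ℝ) : ℝ :=
  sSup {d | ∃ t s : ℝ, 0 ≤ t ∧ 0 ≤ s ∧ |t - s| ≤ δ ∧ d = |f t - f s|}

/-- Bivariate modulus of continuity on `[0,∞) × [0,∞)`. -/
def omegaMod2 (f : ℝ → ℝ → ℝ) (δ₁ δ₂ : ℝ) : ℝ :=
  sSup {d | ∃ x' y' x y : ℝ, 0 ≤ x' ∧ 0 ≤ y' ∧ 0 ≤ x ∧ 0 ≤ y ∧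
    |x' - x| ≤ δ₁ ∧ |y' - y| ≤ δ₂ ∧ d = |f x' y' - f x y|}

/-- The bivariate Stancu type `q`-Baskakov–Kantorovich operator. -/
def Lop2 (q₁ q₂ α β : ℝ) (n₁ n₂ : ℕ) (φ₁ φ₂ : ℝ → ℝ) (f : ℝ → ℝ → ℝ) (x y : ℝ) : ℝ :=
  (qInt q₁ n₁ + β) * (qInt q₂ n₂ + β) *
    ∑' k₁ : ℕ, ∑' k₂ : ℕ, w q₁ φ₁ k₁ x * w q₂ φ₂ k₂ y *
      jackson q₁ (aNode q₁ α β n₁ k₁) (bNode q₁ α β n₁ k₁) (fun t =>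
        jackson q₂ (aNode q₂ α β n₂ k₂) (bNode q₂ α β n₂ k₂) (fun s =>
          f (q₁ ^ (1 - (k₁ : ℤ)) * t) (q₂ ^ (1 - (k₂ : ℤ)) * s)))

/-! With `u = q^{1-k}`, `D = [n]_q + β` and `T_k` the node of the discrete Stancu–Baskakov
operator, the Kantorovich nodes satisfy `b_k - a_k = 1/D`, `u a_k = q T_k` and
`u b_k = T_k + (q - (1-q)α)/D`. Since `∫_a^b (u t)^2 d_q t = u^2 (b^3 - a^3)/[3]_q`, factoring
`b^3 - a^3 = (b - a)(b^2 + ab + a^2)` makes the `k`-th integral a quadratic polynomial in `T_k`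
whose coefficients do not depend on `k`. Summing against the weights `w_k` expresses
`L*_n(e_2)` through the three given moments of the discrete operator. -/

section QCalculus

variable {q : ℝ}

lemma qInt_succ (q : ℝ) (k : ℕ) : qInt q (k + 1) = q * qInt q k + 1 := geom_sum_succ

lemma qInt_succ' (q : ℝ) (k : ℕ) : qInt q (k + 1) = q ^ k + qInt q k := geom_sum_succ'

lemma qInt_two (q : ℝ) : qInt q 2 = 1 + q := by
  simp [qInt, Finset.sum_range_succ]

lemma qInt_three (q : ℝ) : qInt q 3 = 1 + q + q ^ 2 := by
  simp [qInt, Finset.sum_range_succ]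

lemma qInt_pos (hq : 0 < q) {p : ℕ} (hp : p ≠ 0) : 0 < qInt q p :=
  Finset.sum_pos (fun i _ => pow_pos hq i) (Finset.nonempty_range_iff.2 hp)

lemma qInt_mul_one_sub (hq : q ≠ 1) (p : ℕ) : qInt q p * (1 - q) = 1 - q ^ p := by
  rw [qInt, geom_sum_eq hq]
  field_simp [sub_ne_zero.2 hq]
  ring

lemma jackson0_mul_pow (hq0 : 0 ≤ q) (hq1 : q < 1) (s c : ℝ) (p : ℕ) :
    jackson0 q c (fun t => (s * t) ^ p) = s ^ p * c ^ (p + 1) / qInt q (p + 1) := by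
  have hqp : q ^ (p + 1) < 1 := pow_lt_one₀ hq0 hq1 (Nat.succ_ne_zero p)
  have hsum : ∑' j : ℕ, q ^ j * (s * (c * q ^ j)) ^ p = (s * c) ^ p * (1 - q ^ (p + 1))⁻¹ := by
    simp_rw [show ∀ j : ℕ, q ^ j * (s * (c * q ^ j)) ^ p = (s * c) ^ p * (q ^ (p + 1)) ^ j from
      fun j => by ring]
    rw [tsum_mul_left, tsum_geometric_of_lt_one (by positivity) hqp]
  have hint := qInt_mul_one_sub hq1.ne (p + 1)
  have hne : 1 - q ^ (p + 1) ≠ 0 := by linarith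
  have hne' : qInt q (p + 1) ≠ 0 := fun h => hne (by rw [← hint, h, zero_mul])
  have hq1' : 1 - q ≠ 0 := by linarith
  rw [jackson0, hsum, ← hint]
  field_simp
  ring

lemma jackson_mul_pow (hq0 : 0 ≤ q) (hq1 : q < 1) (s a b : ℝ) (p : ℕ) :
    jackson q a b (fun t => (s * t) ^ p) =
      s ^ p * (b ^ (p + 1) - a ^ (p + 1)) / qInt q (p + 1) := by
  rw [jackson, jackson0_mul_pow hq0 hq1, jackson0_mul_pow hq0 hq1]
  ring

end QCalculus

def stancuNode (q α β : ℝ) (n k : ℕ) : ℝ :=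
  (qInt q k + q ^ ((k : ℤ) - 1) * α) / (q ^ ((k : ℤ) - 1) * (qInt q n + β))

section Nodes

variable {q : ℝ} (α β : ℝ) (n k : ℕ)

lemma bNode_sub_aNode (hq : q ≠ 0) :
    bNode q α β n k - aNode q α β n k = 1 / (qInt q n + β) := by
  rw [bNode, aNode, qInt_succ, zpow_sub_one₀ hq, zpow_natCast]
  field_simp
  ring

lemma zpow_mul_aNode (hq : q ≠ 0) :
    q ^ (1 - (k : ℤ)) * aNode q α β n k = q * stancuNode q α β n k := by
  rw [aNode, stancuNode, zpow_sub₀ hq, zpow_sub₀ hq]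
  field_simp

lemma zpow_mul_bNode (hq : q ≠ 0) (hD : qInt q n + β ≠ 0) :
    q ^ (1 - (k : ℤ)) * bNode q α β n k =
      stancuNode q α β n k + (q - (1 - q) * α) / (qInt q n + β) := by
  rw [bNode, stancuNode, qInt_succ', zpow_sub₀ hq, zpow_sub₀ hq, zpow_one, zpow_natCast]
  field_simp
  ring

end Nodes

section Operator

variable {q : ℝ} (α β : ℝ) (n : ℕ)

lemma jackson_aNode_bNode_sq (hq0 : 0 < q) (hq1 : q < 1) (hD : qInt q n + β ≠ 0) (k : ℕ) :
    jackson q (aNode q α β n k) (bNode q α β n k) (fun t => (q ^ (1 - (k : ℤ)) * t) ^ 2) =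
      (stancuNode q α β n k ^ 2
        + (2 + q) * (q - (1 - q) * α) / (qInt q 3 * (qInt q n + β)) * stancuNode q α β n k
        + (q - (1 - q) * α) ^ 2 / (qInt q 3 * (qInt q n + β) ^ 2)) / (qInt q n + β) := by
  set u := q ^ (1 - (k : ℤ))
  set a := aNode q α β n k
  set b := bNode q α β n k
  have hcube :
      u ^ 2 * (b ^ 3 - a ^ 3) = (b - a) * ((u * b) ^ 2 + (u * a) * (u * b) + (u * a) ^ 2) := by
    ring
  rw [jackson_mul_pow hq0.le hq1, hcube, bNode_sub_aNode α β n k hq0.ne',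
    zpow_mul_aNode α β n k hq0.ne', zpow_mul_bNode α β n k hq0.ne' hD, qInt_three]
  field_simp
  ring

lemma Lop_sq_eq_of_hasSum (hq0 : 0 < q) (hq1 : q < 1) (hD : qInt q n + β ≠ 0)
    {φ : ℝ → ℝ} {x M₀ M₁ M₂ : ℝ}
    (h₀ : HasSum (fun k => w q φ k x) M₀)
    (h₁ : HasSum (fun k => w q φ k x * stancuNode q α β n k) M₁)
    (h₂ : HasSum (fun k => w q φ k x * stancuNode q α β n k ^ 2) M₂) :
    Lop q α β n φ (fun t => t ^ 2) x =
      M₂ + (2 + q) * (q - (1 - q) * α) / (qInt q 3 * (qInt q n + β)) * M₁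
        + (q - (1 - q) * α) ^ 2 / (qInt q 3 * (qInt q n + β) ^ 2) * M₀ := by
  set c₁ := (2 + q) * (q - (1 - q) * α) / (qInt q 3 * (qInt q n + β))
  set c₀ := (q - (1 - q) * α) ^ 2 / (qInt q 3 * (qInt q n + β) ^ 2)
  have hS := ((h₂.add (h₁.mul_right c₁)).add (h₀.mul_right c₀)).div_const (qInt q n + β)
  rw [Lop]
  simp_rw [jackson_aNode_bNode_sq α β n hq0 hq1 hD]
  rw [(hS.congr_fun ?_).tsum_eq]
  · field_simp
  · intro k
    ring

end Operator

theorem stmt6_general (q α β : ℝ) (hq0 : 0 < q) (hq1 : q < 1) (hα : 0 ≤ α) (hαβ : α ≤ β)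
    (n m : ℕ) (hn : 1 ≤ n) (φ : ℝ → ℝ) (x : ℝ)
    (hsum : HasSum (fun k => w q φ k x) 1)
    (hsum1 : HasSum
      (fun k => w q φ k x * ((qInt q k + q ^ ((k : ℤ) - 1) * α) /
        (q ^ ((k : ℤ) - 1) * (qInt q n + β))))
      (qInt q n * x / (qInt q n + β) + α / (qInt q n + β)))
    (hsum2 : HasSum
      (fun k => w q φ k x * ((qInt q k + q ^ ((k : ℤ) - 1) * α) /
        (q ^ ((k : ℤ) - 1) * (qInt q n + β))) ^ 2)
      (qInt q n * qInt q m * x ^ 2 / (q * (qInt q n + β) ^ 2)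
        + qInt q n * (2 * α + 1) * x / (qInt q n + β) ^ 2
        + α ^ 2 / (qInt q n + β) ^ 2)) :
    Lop q α β n φ (fun t => t ^ 2) x =
      qInt q n * qInt q m * x ^ 2 / (q * (qInt q n + β) ^ 2)
        + qInt q n * (qInt q 3 + q * ((1 + 3 * α) * qInt q 2 + 1)) * x
            / (qInt q 3 * (qInt q n + β) ^ 2)
        + q ^ 2 * (1 + 3 * α + 3 * α ^ 2) / (qInt q 3 * (qInt q n + β) ^ 2) := by
  have hD : qInt q n + β ≠ 0 := by
    have := qInt_pos hq0 (Nat.one_le_iff_ne_zero.1 hn)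
    linarith
  rw [Lop_sq_eq_of_hasSum α β n hq0 hq1 hD hsum hsum1 hsum2, qInt_two, qInt_three]
  field_simp
  ring

theorem stmt6 (q α β : ℝ) (hq0 : 0 < q) (hq1 : q < 1) (hα : 0 ≤ α) (hαβ : α ≤ β)
    (n m : ℕ) (hn : 1 ≤ n) (hm : 1 ≤ m) (φ : ℝ → ℝ) (x : ℝ) (hx : 0 ≤ x)
    (hw : ∀ k, 0 ≤ w q φ k x)
    (hsum : HasSum (fun k => w q φ k x) 1)
    (hsum1 : HasSum
      (fun k => w q φ k x * ((qInt q k + q ^ ((k : ℤ) - 1) * α) /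
        (q ^ ((k : ℤ) - 1) * (qInt q n + β))))
      (qInt q n * x / (qInt q n + β) + α / (qInt q n + β)))
    (hsum2 : HasSum
      (fun k => w q φ k x * ((qInt q k + q ^ ((k : ℤ) - 1) * α) /
        (q ^ ((k : ℤ) - 1) * (qInt q n + β))) ^ 2)
      (qInt q n * qInt q m * x ^ 2 / (q * (qInt q n + β) ^ 2)
        + qInt q n * (2 * α + 1) * x / (qInt q n + β) ^ 2
        + α ^ 2 / (qInt q n + β) ^ 2)) :
    Lop q α β n φ (fun t => t ^ 2) x =
      qInt q n * qInt q m * x ^ 2 / (q * (qInt q n + β) ^ 2)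
        + qInt q n * (qInt q 3 + q * ((1 + 3 * α) * qInt q 2 + 1)) * x
            / (qInt q 3 * (qInt q n + β) ^ 2)
        + q ^ 2 * (1 + 3 * α + 3 * α ^ 2) / (qInt q 3 * (qInt q n + β) ^ 2) :=
  stmt6_general q α β hq0 hq1 hα hαβ n m hn φ x hsum hsum1 hsum2

end
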